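/- arXiv:1204.5390 — 5 statements merged into one kernel-verified Lean document; each statement's English description precedes it below -/
import Mathlib

section
/- Let p be a prime and let n = Σ_{j=0}^k n_j p^j be the base-p expansion of n. Then the multinomial coefficient n!/((1!)^{n_0} (p!)^{n_1} (p^2!)^{n_2} ⋯ (p^k!)^{n_k}) is an integer not divisible by p. -/
open Finset

lemma list_sum_eq_sum_getD (L : List ℕ) :
    L.sum = ∑ i ∈ Finset.range L.length, L.getD i 0 := by
  induction L with
  | nil => simp
  | cons a l ih =>
    simp [Finset.sum_range_succ', ih, List.getD]
    omega

lemma ofDigits_eq_sum_getD (b : ℕ) (L : List ℕ) :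
    Nat.ofDigits b L = ∑ i ∈ Finset.range L.length, L.getD i 0 * b ^ i := by
  induction L with
  | nil => simp [Nat.ofDigits]
  | cons a l ih =>
    simp only [Nat.ofDigits_cons, List.length_cons, Finset.sum_range_succ', List.getD]
    push_cast [ih]
    simp [pow_succ, Finset.mul_sum]
    rw [add_comm]
    congr 1
    exact Finset.sum_congr rfl fun i _ => by ring

lemma prod_pow_factorial_dvd (p n : ℕ) (hp : 1 < p) :
    (∏ j ∈ Finset.range (Nat.digits p n).length,
      (Nat.factorial (p ^ j)) ^ ((Nat.digits p n).getD j 0)) ∣ Nat.factorial n := by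
  set L := Nat.digits p n with hL
  have hsum : n = ∑ j ∈ Finset.range L.length, L.getD j 0 * p ^ j := by
    conv_lhs => rw [← Nat.ofDigits_digits p n]
    rw [← hL, ofDigits_eq_sum_getD]
  set s : Finset ((_ : ℕ) × ℕ) :=
    (Finset.range L.length).sigma (fun j => Finset.range (L.getD j 0)) with hs
  have hsum' : (∑ x ∈ s, p ^ x.1) = n := by
    rw [hs, Finset.sum_sigma]
    simp [hsum, mul_comm]
  have := Nat.prod_factorial_dvd_factorial_sum s (fun x => p ^ x.1)
  rw [hsum'] at this
  refine dvd_trans (dvd_of_eq ?_) this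
  rw [hs, Finset.prod_sigma]
  simp [Finset.prod_const]

lemma sum_digits_pow (p j : ℕ) (hp : 1 < p) : (Nat.digits p (p ^ j)).sum = 1 := by
  have : Nat.digits p (p ^ j) = List.replicate j 0 ++ Nat.digits p 1 := by
    have := Nat.digits_base_pow_mul (b := p) (k := j) (m := 1) hp one_pos
    simpa using this
  have h1 : Nat.digits p 1 = [1] := by
    rw [Nat.digits_def' hp one_pos]
    simp [Nat.mod_eq_of_lt hp, Nat.div_eq_of_lt hp]
  rw [this, List.sum_append, List.sum_replicate, h1]
  simp

/-- If `n = Σ_j n_j p^j` is the base-`p` expansion of `n`, then the multinomial coefficient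
`n! / ∏_j (p^j !)^{n_j}` is an integer not divisible by `p`. -/
theorem multinomial_padic_expansion_not_dvd (p : ℕ) (hp : p.Prime) (n : ℕ) :
    ∃ m : ℕ, ¬ p ∣ m ∧
      Nat.factorial n =
        m * ∏ j ∈ Finset.range (Nat.digits p n).length,
          (Nat.factorial (p ^ j)) ^ ((Nat.digits p n).getD j 0) := by
  haveI : Fact p.Prime := ⟨hp⟩
  have hp1 : 1 < p := hp.one_lt
  set L := Nat.digits p n with hL
  set P := ∏ j ∈ Finset.range L.length, (Nat.factorial (p ^ j)) ^ (L.getD j 0) with hP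
  have hdvd : P ∣ Nat.factorial n := prod_pow_factorial_dvd p n hp1
  have hPne : P ≠ 0 := by
    rw [hP]
    exact Finset.prod_ne_zero_iff.mpr fun j _ => pow_ne_zero _ (Nat.factorial_ne_zero _)
  refine ⟨Nat.factorial n / P, ?_, (Nat.div_mul_cancel hdvd).symm⟩
  -- valuations
  have hval : padicValNat p P = padicValNat p (Nat.factorial n) := by
    have key : (p - 1) * padicValNat p P = (p - 1) * padicValNat p (Nat.factorial n) := by
      rw [sub_one_mul_padicValNat_factorial]
      have hvalP : padicValNat p P =
          ∑ j ∈ Finset.range L.length, L.getD j 0 * padicValNat p (Nat.factorial (p ^ j)) := by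
        rw [← Nat.factorization_def _ hp, hP,
          Nat.factorization_prod (fun j _ => pow_ne_zero _ (Nat.factorial_ne_zero _))]
        simp only [Nat.factorization_pow, Finsupp.coe_finset_sum, Finset.sum_apply,
          Finsupp.coe_smul, Pi.smul_apply, smul_eq_mul]
        exact Finset.sum_congr rfl fun j _ => by
          rw [Nat.factorization_def _ hp]
      rw [hvalP, Finset.mul_sum]
      have hterm : ∀ j, (p - 1) * (L.getD j 0 * padicValNat p (Nat.factorial (p ^ j)))
          = L.getD j 0 * (p ^ j - 1) := by
        intro j
        have h := sub_one_mul_padicValNat_factorial (p := p) (p ^ j)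
        rw [sum_digits_pow p j hp1] at h
        calc (p - 1) * (L.getD j 0 * padicValNat p (Nat.factorial (p ^ j)))
            = L.getD j 0 * ((p - 1) * padicValNat p (Nat.factorial (p ^ j))) := by ring
          _ = _ := by rw [h]
      simp_rw [hterm]
      have hsum : n = ∑ j ∈ Finset.range L.length, L.getD j 0 * p ^ j := by
        conv_lhs => rw [← Nat.ofDigits_digits p n]
        rw [← hL, ofDigits_eq_sum_getD]
      have hdigsum : L.sum = ∑ j ∈ Finset.range L.length, L.getD j 0 :=
        list_sum_eq_sum_getD L
      rw [hdigsum]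
      conv_rhs => rw [hsum]
      rw [← Finset.sum_tsub_distrib _ (fun j _ => Nat.le_mul_of_pos_right _ (Nat.pow_pos (by omega : 0 < p)))]
      exact Finset.sum_congr rfl fun j _ => by
        have h1 : 1 ≤ p ^ j := Nat.one_le_pow _ _ (by omega)
        rw [Nat.mul_sub_one]
    have hpm1 : p - 1 ≠ 0 := by omega
    exact Nat.eq_of_mul_eq_mul_left (by omega) key
  -- conclude
  intro hdvdm
  have hfne : Nat.factorial n ≠ 0 := Nat.factorial_ne_zero n
  have hmne : Nat.factorial n / P ≠ 0 := by
    intro h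
    rw [← Nat.div_mul_cancel hdvd, h, zero_mul] at hfne
    exact hfne rfl
  have : padicValNat p (Nat.factorial n) =
      padicValNat p (Nat.factorial n / P) + padicValNat p P := by
    conv_lhs => rw [← Nat.div_mul_cancel hdvd]
    exact padicValNat.mul hmne hPne
  have hpos : 1 ≤ padicValNat p (Nat.factorial n / P) :=
    one_le_padicValNat_of_dvd hmne hdvdm
  omega
end

section
/- Let p be a prime and i a positive integer. The ideal of ℤ generated by the integers p^{v_p(j)} · C(i, j) for 1 ≤ j ≤ i−1 together with p^{v_p(i)} equals the ideal generated by p^{v_p(i)}. -/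
/-- Key divisibility: `p^{v_p(i)}` divides `p^{v_p(j)} * C(i,j)` for `1 ≤ j < i`. -/
lemma key_dvd (p : ℕ) (hp : p.Prime) (i j : ℕ) (hj1 : 1 ≤ j) (hji : j < i) :
    p ^ padicValNat p i ∣ p ^ padicValNat p j * i.choose j := by
  haveI : Fact p.Prime := ⟨hp⟩
  have hj0 : j ≠ 0 := by omega
  have hc0 : i.choose j ≠ 0 := Nat.choose_pos hji.le |>.ne'
  have hi0 : i ≠ 0 := by omega
  -- i ∣ j * C(i,j)
  have hdvd : i ∣ i.choose j * j := by
    obtain ⟨n, rfl⟩ : ∃ n, i = n + 1 := ⟨i - 1, by omega⟩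
    obtain ⟨k, rfl⟩ : ∃ k, j = k + 1 := ⟨j - 1, by omega⟩
    exact ⟨n.choose k, (Nat.add_one_mul_choose_eq n k).symm⟩
  have h1 : p ^ padicValNat p i ∣ i.choose j * j :=
    dvd_trans pow_padicValNat_dvd hdvd
  have h2 : padicValNat p i ≤ padicValNat p (i.choose j * j) := by
    rw [← padicValNat_dvd_iff_le (mul_ne_zero hc0 hj0)]
    exact h1
  rw [padicValNat.mul hc0 hj0] at h2
  calc p ^ padicValNat p i ∣ p ^ (padicValNat p j + padicValNat p (i.choose j)) :=
        pow_dvd_pow p (by omega)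
    _ = p ^ padicValNat p j * p ^ padicValNat p (i.choose j) := pow_add p _ _
    _ ∣ p ^ padicValNat p j * i.choose j :=
        mul_dvd_mul_left _ pow_padicValNat_dvd

/-- For a prime `p` and `i > 0`, the ideal of `ℤ` generated by the elements
`p^{v_p(j)} * C(i,j)` for `1 ≤ j ≤ i-1` together with `p^{v_p(i)}` is the ideal
generated by `p^{v_p(i)}`. -/
theorem ideal_binomial_padic (p : ℕ) (hp : p.Prime) (i : ℕ) (hi : 0 < i) :
    Ideal.span (((fun j : ℕ => ((p : ℤ) ^ padicValNat p j) * (i.choose j)) '' Set.Ico 1 i) ∪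
        {(p : ℤ) ^ padicValNat p i}) =
      Ideal.span {(p : ℤ) ^ padicValNat p i} := by
  apply le_antisymm
  · rw [Ideal.span_le]
    rintro x (⟨j, ⟨hj1, hji⟩, rfl⟩ | rfl)
    · rw [SetLike.mem_coe, Ideal.mem_span_singleton]
      have := key_dvd p hp i j hj1 hji
      have := Int.natCast_dvd_natCast.mpr this
      push_cast at this
      exact this
    · exact Ideal.subset_span rfl
  · exact Ideal.span_mono (Set.subset_union_right)
end

section
/- For n > 0, there is no nonzero homogeneous polynomial of degree n in ℤ[x,y] that is invariant under the SL_2(ℤ)-action determined by σ_1: x ↦ x − y, y ↦ y and σ_2: x ↦ x, y ↦ x + y. -/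
open MvPolynomial

/-- For `n > 0` there is no nonzero homogeneous polynomial of degree `n` in `ℤ[x,y]`
invariant under the `SL₂(ℤ)`-action generated by `x ↦ x - y, y ↦ y` and
`x ↦ x, y ↦ x + y`. -/
theorem no_nonzero_homogeneous_SL2Z_invariant (n : ℕ) (hn : 0 < n)
    (P : MvPolynomial (Fin 2) ℤ) (hP : P.IsHomogeneous n)
    (h1 : aeval ![(X 0 : MvPolynomial (Fin 2) ℤ) - X 1, X 1] P = P)
    (h2 : aeval ![(X 0 : MvPolynomial (Fin 2) ℤ), X 0 + X 1] P = P) :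
    P = 0 := by
  -- degrees of monomials
  have hdeg : ∀ m : Fin 2 →₀ ℕ, coeff m P ≠ 0 → m 0 + m 1 = n := by
    intro m hm
    have h := hP hm
    rw [← h, Finsupp.weight_apply, Finsupp.sum]
    rw [Finset.sum_subset (Finset.subset_univ m.support)
      (by simp +contextual [Finsupp.notMem_support_iff])]
    simp [Fin.sum_univ_two]
  -- evaluation transfer lemmas
  have key2 : ∀ a b : ℤ, aeval ![a, a + b] P = aeval ![a, b] P := by
    intro a b
    conv_rhs => rw [← h2]
    rw [comp_aeval_apply]
    have : (fun i => (aeval ![a, b] : MvPolynomial (Fin 2) ℤ →ₐ[ℤ] ℤ)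
        (![X 0, X 0 + X 1] i)) = ![a, a + b] := by
      funext i; fin_cases i <;> simp
    rw [this]
  have key1 : ∀ a b : ℤ, aeval ![a - b, b] P = aeval ![a, b] P := by
    intro a b
    conv_rhs => rw [← h1]
    rw [comp_aeval_apply]
    have : (fun i => (aeval ![a, b] : MvPolynomial (Fin 2) ℤ →ₐ[ℤ] ℤ)
        (![X 0 - X 1, X 1] i)) = ![a - b, b] := by
      funext i; fin_cases i <;> simp
    rw [this]
  -- eval on the line x = 1 is constant
  have hg : ∀ t : ℤ, aeval ![1, t] P = aeval ![(1:ℤ), 0] P := by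
    intro t
    induction t using Int.induction_on with
    | zero => rfl
    | succ k ih =>
      rw [show ((k:ℤ) + 1) = 1 + k by ring, key2 1 k]; exact ih
    | pred k ih =>
      have h := key2 1 (-(k:ℤ) - 1)
      rw [show (1:ℤ) + (-(k:ℤ) - 1) = -k by ring] at h
      rw [← h]; exact ih
  -- eval on the line y = 1 is constant
  have hh : ∀ t : ℤ, aeval ![t, 1] P = aeval ![(0:ℤ), 1] P := by
    intro t
    induction t using Int.induction_on with
    | zero => rfl
    | succ k ih =>
      have h := key1 ((k:ℤ) + 1) 1
      rw [show ((k:ℤ) + 1 - 1) = (k:ℤ) by ring] at h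
      rw [← h]; exact ih
    | pred k ih =>
      have h := key1 (-(k:ℤ)) 1
      rw [show (-(k:ℤ) - 1) = -(k:ℤ) - 1 by ring] at h
      rw [show (-(k:ℤ) - 1) = -(k:ℤ) - 1 by ring]
      rw [h]; exact ih
  -- the one-variable polynomials
  set Q : Polynomial ℤ := aeval ![(1 : Polynomial ℤ), Polynomial.X] P with hQdef
  set R : Polynomial ℤ := aeval ![Polynomial.X, (1 : Polynomial ℤ)] P with hRdef
  have hQeval : ∀ t : ℤ, Q.eval t = aeval ![1, t] P := by
    intro t
    rw [hQdef, ← Polynomial.coe_aeval_eq_eval, comp_aeval_apply]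
    have : (fun i => (Polynomial.aeval t : Polynomial ℤ →ₐ[ℤ] ℤ)
        (![(1 : Polynomial ℤ), Polynomial.X] i)) = ![(1:ℤ), t] := by
      funext i; fin_cases i <;> simp
    rw [this]
  have hReval : ∀ t : ℤ, R.eval t = aeval ![t, 1] P := by
    intro t
    rw [hRdef, ← Polynomial.coe_aeval_eq_eval, comp_aeval_apply]
    have : (fun i => (Polynomial.aeval t : Polynomial ℤ →ₐ[ℤ] ℤ)
        (![Polynomial.X, (1 : Polynomial ℤ)] i)) = ![t, (1:ℤ)] := by
      funext i; fin_cases i <;> simp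
    rw [this]
  -- Q and R are constant polynomials
  have hQC : Q = Polynomial.C (aeval ![(1:ℤ), 0] P) := by
    apply Polynomial.funext
    intro t
    rw [hQeval t, hg t, Polynomial.eval_C]
  have hRC : R = Polynomial.C (aeval ![(0:ℤ), 1] P) := by
    apply Polynomial.funext
    intro t
    rw [hReval t, hh t, Polynomial.eval_C]
  -- coefficient extraction
  have hQsum : Q = ∑ m ∈ P.support, Polynomial.C (coeff m P) * Polynomial.X ^ (m 1) := by
    rw [hQdef, aeval_def, eval₂_eq]
    refine Finset.sum_congr rfl fun m' _ => ?_
    rw [Finset.prod_subset (Finset.subset_univ m'.support)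
      (by simp +contextual [Finsupp.notMem_support_iff]), Fin.prod_univ_two]
    simp [algebraMap_int_eq, Polynomial.C_eq_intCast]
  have hRsum : R = ∑ m ∈ P.support, Polynomial.C (coeff m P) * Polynomial.X ^ (m 0) := by
    rw [hRdef, aeval_def, eval₂_eq]
    refine Finset.sum_congr rfl fun m' _ => ?_
    rw [Finset.prod_subset (Finset.subset_univ m'.support)
      (by simp +contextual [Finsupp.notMem_support_iff]), Fin.prod_univ_two]
    simp [algebraMap_int_eq, Polynomial.C_eq_intCast, mul_comm]
  have huniq : ∀ m m' : Fin 2 →₀ ℕ, m ∈ P.support → m' ∈ P.support →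
      (m 0 = m' 0 ∨ m 1 = m' 1) → m = m' := by
    intro m m' hm hm' hcase
    have d1 := hdeg m (mem_support_iff.1 hm)
    have d2 := hdeg m' (mem_support_iff.1 hm')
    have h0 : m 0 = m' 0 := by omega
    have h1 : m 1 = m' 1 := by omega
    ext i
    fin_cases i
    · exact h0
    · exact h1
  have hQcoeff : ∀ m ∈ P.support, Q.coeff (m 1) = coeff m P := by
    intro m hm
    rw [hQsum, Polynomial.finset_sum_coeff, Finset.sum_eq_single m]
    · simp [Polynomial.coeff_C_mul, Polynomial.coeff_X_pow]
    · intro m' hm' hne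
      have hd1 : m' 1 ≠ m 1 := fun h => hne (huniq m' m hm' hm (Or.inr h))
      simp [Polynomial.coeff_C_mul, Polynomial.coeff_X_pow, Ne.symm hd1]
    · intro h; exact absurd hm h
  have hRcoeff : ∀ m ∈ P.support, R.coeff (m 0) = coeff m P := by
    intro m hm
    rw [hRsum, Polynomial.finset_sum_coeff, Finset.sum_eq_single m]
    · simp [Polynomial.coeff_C_mul, Polynomial.coeff_X_pow]
    · intro m' hm' hne
      have hd1 : m' 0 ≠ m 0 := fun h => hne (huniq m' m hm' hm (Or.inl h))
      simp [Polynomial.coeff_C_mul, Polynomial.coeff_X_pow, Ne.symm hd1]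
    · intro h; exact absurd hm h
  -- conclude
  by_contra hPne
  obtain ⟨m, hm⟩ := exists_coeff_ne_zero hPne
  have hmsup : m ∈ P.support := mem_support_iff.2 hm
  have hd := hdeg m hm
  rcases Nat.eq_zero_or_pos (m 1) with h10 | h1pos
  · have h0pos : 0 < m 0 := by omega
    have : coeff m P = 0 := by
      rw [← hRcoeff m hmsup, hRC, Polynomial.coeff_C]
      simp [Nat.pos_iff_ne_zero.1 h0pos]
    exact hm this
  · have : coeff m P = 0 := by
      rw [← hQcoeff m hmsup, hQC, Polynomial.coeff_C]
      simp [Nat.pos_iff_ne_zero.1 h1pos]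
    exact hm this
end

section
/- For every prime p, the polynomials P_p = x y (x^{p−1} − y^{p−1}) and Q_p = Σ_{h=0}^{p} (x^{p−1})^{p−h} (y^{p−1})^{h} in F_p[x,y] are invariant under the action of SL_2(F_p). -/
open MvPolynomial

private lemma aux_frob {p : ℕ} [Fact p.Prime] (u v : ZMod p) (k : ℕ) :
    (C u * X 0 + C v * X 1 : MvPolynomial (Fin 2) (ZMod p)) ^ p ^ k
      = C u * X 0 ^ p ^ k + C v * X 1 ^ p ^ k := by
  rw [add_pow_char_pow, mul_pow, mul_pow, ← C_pow, ← C_pow, ZMod.pow_card_pow,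
    ZMod.pow_card_pow]

private lemma aux_P {p : ℕ} [Fact p.Prime] (a b c d : ZMod p)
    (hdet : a * d - b * c = 1) (k : ℕ) :
    (C a * X 0 + C b * X 1 : MvPolynomial (Fin 2) (ZMod p)) ^ p ^ k
        * (C c * X 0 + C d * X 1)
      - (C a * X 0 + C b * X 1) * (C c * X 0 + C d * X 1) ^ p ^ k
      = (X 0 : MvPolynomial (Fin 2) (ZMod p)) ^ p ^ k * X 1 - X 0 * X 1 ^ p ^ k := by
  rw [aux_frob, aux_frob]
  have hdet' : C a * C d - C b * C c = (1 : MvPolynomial (Fin 2) (ZMod p)) := by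
    rw [← C_mul, ← C_mul, ← C_sub, hdet, C_1]
  linear_combination ((X 0 : MvPolynomial (Fin 2) (ZMod p)) ^ p ^ k * X 1
    - X 0 * X 1 ^ p ^ k) * hdet'

/-- For every prime `p`, the Dickson invariants
`P_p = xy(x^{p-1} - y^{p-1})` and `Q_p = Σ_{h=0}^p x^{(p-1)(p-h)} y^{(p-1)h}` in `F_p[x,y]`
are invariant under the linear substitution action of `SL₂(F_p)`. -/
theorem dickson_invariants_SL2 (p : ℕ) (hp : Fact p.Prime)
    (A : Matrix.SpecialLinearGroup (Fin 2) (ZMod p)) :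
    aeval (fun i : Fin 2 => ∑ j : Fin 2, C (A.1 i j) * X j)
        ((X 0 : MvPolynomial (Fin 2) (ZMod p)) * X 1 * ((X 0) ^ (p - 1) - (X 1) ^ (p - 1))) =
      (X 0 : MvPolynomial (Fin 2) (ZMod p)) * X 1 * ((X 0) ^ (p - 1) - (X 1) ^ (p - 1)) ∧
    aeval (fun i : Fin 2 => ∑ j : Fin 2, C (A.1 i j) * X j)
        (∑ h ∈ Finset.range (p + 1),
          (X 0 : MvPolynomial (Fin 2) (ZMod p)) ^ ((p - 1) * (p - h)) * (X 1) ^ ((p - 1) * h)) =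
      ∑ h ∈ Finset.range (p + 1),
        (X 0 : MvPolynomial (Fin 2) (ZMod p)) ^ ((p - 1) * (p - h)) * (X 1) ^ ((p - 1) * h) := by
  set f : Fin 2 → MvPolynomial (Fin 2) (ZMod p) :=
    fun i : Fin 2 => ∑ j : Fin 2, C (A.1 i j) * X j with hf
  set a := A.1 0 0
  set b := A.1 0 1
  set c := A.1 1 0
  set d := A.1 1 1
  have hdet : a * d - b * c = 1 := by
    have h2 := A.2
    rw [Matrix.det_fin_two] at h2
    exact h2
  have hf0 : f 0 = C a * X 0 + C b * X 1 := by simp [hf, Fin.sum_univ_two]; rfl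
  have hf1 : f 1 = C c * X 0 + C d * X 1 := by simp [hf, Fin.sum_univ_two]; rfl
  have hp1 : p - 1 + 1 = p := Nat.succ_pred_eq_of_pos hp.out.pos
  -- rewrite P in monomial form
  have e0 : (X 0 : MvPolynomial (Fin 2) (ZMod p)) ^ p = X 0 ^ (p - 1) * X 0 := by
    rw [← pow_succ, hp1]
  have e1 : (X 1 : MvPolynomial (Fin 2) (ZMod p)) ^ p = X 1 ^ (p - 1) * X 1 := by
    rw [← pow_succ, hp1]
  have hPform : (X 0 : MvPolynomial (Fin 2) (ZMod p)) * X 1 * ((X 0) ^ (p - 1) - (X 1) ^ (p - 1))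
      = X 0 ^ p * X 1 - X 0 * X 1 ^ p := by
    rw [e0, e1]; ring
  have hP : aeval f ((X 0 : MvPolynomial (Fin 2) (ZMod p)) * X 1
        * ((X 0) ^ (p - 1) - (X 1) ^ (p - 1)))
      = (X 0 : MvPolynomial (Fin 2) (ZMod p)) * X 1 * ((X 0) ^ (p - 1) - (X 1) ^ (p - 1)) := by
    rw [hPform, map_sub, map_mul, map_mul, map_pow, map_pow, aeval_X, aeval_X, hf0, hf1]
    have := aux_P a b c d hdet 1
    rw [pow_one] at this
    rw [this]
  refine ⟨hP, ?_⟩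
  -- the Q part
  set av : MvPolynomial (Fin 2) (ZMod p) := X 0 ^ (p - 1) with hav
  set bv : MvPolynomial (Fin 2) (ZMod p) := X 1 ^ (p - 1) with hbv
  set Q : MvPolynomial (Fin 2) (ZMod p) :=
    ∑ h ∈ Finset.range (p + 1), X 0 ^ ((p - 1) * (p - h)) * X 1 ^ ((p - 1) * h) with hQ
  set P : MvPolynomial (Fin 2) (ZMod p) := X 0 * X 1 * (av - bv) with hPdef
  have hQform : Q = ∑ h ∈ Finset.range (p + 1), av ^ (p - h) * bv ^ h := by
    simp only [hQ, hav, hbv, ← pow_mul]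
  have hgeom : Q * (av - bv) = av ^ (p + 1) - bv ^ (p + 1) := by
    rw [hQform, ← geom_sum₂_mul av bv (p + 1)]
    congr 1
    rw [← Finset.sum_range_reflect (fun i => av ^ i * bv ^ (p + 1 - 1 - i)) (p + 1)]
    apply Finset.sum_congr rfl
    intro h hh
    rw [Finset.mem_range] at hh
    congr 1 <;> congr 1 <;> omega
  have hPQ : P * Q = X 0 ^ p ^ 2 * X 1 - X 0 * X 1 ^ p ^ 2 := by
    have h1 : (X 0 : MvPolynomial (Fin 2) (ZMod p)) * av ^ (p + 1) = X 0 ^ p ^ 2 := by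
      rw [hav, ← pow_mul, ← pow_succ']
      congr 1
      have := hp.out.pos
      cases p with
      | zero => omega
      | succ q => simp [Nat.succ_sub_one]; ring
    have h2 : (X 1 : MvPolynomial (Fin 2) (ZMod p)) * bv ^ (p + 1) = X 1 ^ p ^ 2 := by
      rw [hbv, ← pow_mul, ← pow_succ']
      congr 1
      cases p with
      | zero => exact absurd hp.out.pos (by omega)
      | succ q => simp [Nat.succ_sub_one]; ring
    calc P * Q = X 0 * X 1 * (Q * (av - bv)) := by rw [hPdef]; ring
    _ = X 0 * X 1 * (av ^ (p + 1) - bv ^ (p + 1)) := by rw [hgeom]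
    _ = (X 0 * av ^ (p + 1)) * X 1 - X 0 * (X 1 * bv ^ (p + 1)) := by ring
    _ = X 0 ^ p ^ 2 * X 1 - X 0 * X 1 ^ p ^ 2 := by rw [h1, h2]
  have hR : aeval f ((X 0 : MvPolynomial (Fin 2) (ZMod p)) ^ p ^ 2 * X 1 - X 0 * X 1 ^ p ^ 2)
      = X 0 ^ p ^ 2 * X 1 - X 0 * X 1 ^ p ^ 2 := by
    rw [map_sub, map_mul, map_mul, map_pow, map_pow, aeval_X, aeval_X, hf0, hf1]
    exact aux_P a b c d hdet 2
  have hPne : P ≠ 0 := by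
    intro h0
    have hPm : P = monomial (Finsupp.single 0 p + Finsupp.single 1 1) 1
        - monomial (Finsupp.single 0 1 + Finsupp.single 1 p) 1 := by
      rw [hPdef, hav, hbv, mul_sub]
      rw [show (X 0 : MvPolynomial (Fin 2) (ZMod p)) * X 1 * X 0 ^ (p-1) = X 0 ^ p * X 1 by
        rw [e0]; ring]
      rw [show (X 0 : MvPolynomial (Fin 2) (ZMod p)) * X 1 * X 1 ^ (p-1) = X 0 * X 1 ^ p by
        rw [e1]; ring]
      rw [X_pow_eq_monomial, X_pow_eq_monomial, X, X, monomial_mul, monomial_mul]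
      simp
    rw [hPm] at h0
    have hco := congrArg (coeff (Finsupp.single 0 p + Finsupp.single 1 1)) h0
    have hne : (Finsupp.single (0 : Fin 2) 1 + Finsupp.single 1 p)
        ≠ (Finsupp.single 0 p + Finsupp.single 1 1) := by
      intro h
      have := DFunLike.congr_fun h 0
      simp [Finsupp.single_apply] at this
      exact hp.out.one_lt.ne' this.symm
    rw [coeff_sub, coeff_monomial, coeff_monomial, if_pos rfl, if_neg hne, coeff_zero] at hco
    simp at hco
  have key : P * aeval f Q = P * Q := by
    calc P * aeval f Q = aeval f (P * Q) := by
          rw [map_mul]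
          congr 1
          rw [hPdef, hav, hbv]
          exact hP.symm
    _ = P * Q := by rw [hPQ, hR, ← hPQ]
  exact mul_left_cancel₀ hPne key
end

section
/- The ring of invariants of ℤ[x,y] under the order-4 automorphism T: x ↦ −y, y ↦ x is generated by d = x² + y², e = x²y², f = x³y − xy³, and these satisfy f² = (d² − 4e)·e. -/
open MvPolynomial

namespace Z4InvAux

abbrev R : Type := MvPolynomial (Fin 2) ℤ

noncomputable def T : R →ₐ[ℤ] R := aeval ![-X 1, X 0]

noncomputable def Ainv : Subalgebra ℤ R :=
  Algebra.adjoin ℤ {X 0 ^ 2 + X 1 ^ 2, X 0 ^ 2 * X 1 ^ 2, X 0 ^ 3 * X 1 - X 0 * X 1 ^ 3}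

noncomputable def sw (m : Fin 2 →₀ ℕ) : Fin 2 →₀ ℕ :=
  Finsupp.single 0 (m 1) + Finsupp.single 1 (m 0)

lemma fin2_eq (m : Fin 2 →₀ ℕ) : Finsupp.single 0 (m 0) + Finsupp.single 1 (m 1) = m := by
  ext i; fin_cases i <;> simp

@[simp] lemma sw0 (m : Fin 2 →₀ ℕ) : sw m 0 = m 1 := by simp [sw]
@[simp] lemma sw1 (m : Fin 2 →₀ ℕ) : sw m 1 = m 0 := by simp [sw]
@[simp] lemma sw_sw (m : Fin 2 →₀ ℕ) : sw (sw m) = m := by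
  rw [sw, sw0, sw1, fin2_eq]

lemma monomial_eq' (a b : ℕ) (c : ℤ) :
    (monomial (Finsupp.single 0 a + Finsupp.single 1 b) c : R) = C c * X 0 ^ a * X 1 ^ b := by
  rw [X_pow_eq_monomial, X_pow_eq_monomial, C_apply, monomial_mul, monomial_mul]
  simp

lemma monomial_eq2 (m : Fin 2 →₀ ℕ) (c : ℤ) :
    (monomial m c : R) = C c * X 0 ^ (m 0) * X 1 ^ (m 1) := by
  conv_lhs => rw [← fin2_eq m]
  rw [monomial_eq']

lemma T_monomial (m : Fin 2 →₀ ℕ) (c : ℤ) :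
    T (monomial m c) = monomial (sw m) ((-1) ^ (m 0) * c) := by
  conv_lhs => rw [← fin2_eq m]
  rw [sw]
  simp only [monomial_eq']
  simp only [map_mul, map_pow, T, aeval_X, aeval_C]
  rw [Matrix.cons_val_zero, Matrix.cons_val_one, Matrix.cons_val_zero]
  rw [neg_pow]
  simp only [algebraMap_eq, map_neg, map_one]
  ring

lemma coeff_T (m : Fin 2 →₀ ℕ) (P : R) :
    coeff m (T P) = (-1) ^ (m 1) * coeff (sw m) P := by
  induction P using MvPolynomial.induction_on' with
  | monomial d c =>
    rw [T_monomial, coeff_monomial, coeff_monomial]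
    by_cases h : d = sw m
    · subst h
      simp
    · rw [if_neg h, if_neg (fun hc => h (by rw [← hc, sw_sw]))]
      simp
  | add p q hp hq => rw [map_add, coeff_add, coeff_add, hp, hq, mul_add]

lemma fixed_rel {P : R} (h : T P = P) (m : Fin 2 →₀ ℕ) :
    coeff m P = (-1) ^ (m 1) * coeff (sw m) P := by
  conv_lhs => rw [← h]
  exact coeff_T m P

lemma hd : (X 0 ^ 2 + X 1 ^ 2 : R) ∈ Ainv := Algebra.subset_adjoin (by simp)
lemma he : (X 0 ^ 2 * X 1 ^ 2 : R) ∈ Ainv := Algebra.subset_adjoin (by simp)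
lemma hf : (X 0 ^ 3 * X 1 - X 0 * X 1 ^ 3 : R) ∈ Ainv := Algebra.subset_adjoin (by simp)

lemma C_mem (c : ℤ) : (C c : R) ∈ Ainv := by
  rw [← algebraMap_eq]; exact Subalgebra.algebraMap_mem _ c

lemma L1 (t : ℕ) : (X 0 ^ (2*t) + X 1 ^ (2*t) : R) ∈ Ainv := by
  suffices h : ∀ t : ℕ, (X 0 ^ (2*t) + X 1 ^ (2*t) : R) ∈ Ainv ∧
      (X 0 ^ (2*(t+1)) + X 1 ^ (2*(t+1)) : R) ∈ Ainv from (h t).1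
  intro t
  induction t with
  | zero =>
    constructor
    · have : (X 0 ^ (2*0) + X 1 ^ (2*0) : R) = 1 + 1 := by norm_num
      rw [this]
      exact Subalgebra.add_mem _ (Subalgebra.one_mem _) (Subalgebra.one_mem _)
    · have : (X 0 ^ (2*(0+1)) + X 1 ^ (2*(0+1)) : R) = X 0 ^ 2 + X 1 ^ 2 := by norm_num
      rw [this]; exact hd
  | succ n ih =>
    refine ⟨ih.2, ?_⟩
    have key : (X 0 ^ (2*(n+2)) + X 1 ^ (2*(n+2)) : R) =
        (X 0 ^ 2 + X 1 ^ 2) * (X 0 ^ (2*(n+1)) + X 1 ^ (2*(n+1)))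
        - (X 0 ^ 2 * X 1 ^ 2) * (X 0 ^ (2*n) + X 1 ^ (2*n)) := by ring
    rw [key]
    exact Subalgebra.sub_mem _ (Subalgebra.mul_mem _ hd ih.2) (Subalgebra.mul_mem _ he ih.1)

lemma L2 (t : ℕ) : (X 0 ^ (2*t+1) * X 1 - X 0 * X 1 ^ (2*t+1) : R) ∈ Ainv := by
  suffices h : ∀ t : ℕ, (X 0 ^ (2*t+1) * X 1 - X 0 * X 1 ^ (2*t+1) : R) ∈ Ainv ∧
      (X 0 ^ (2*(t+1)+1) * X 1 - X 0 * X 1 ^ (2*(t+1)+1) : R) ∈ Ainv from (h t).1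
  intro t
  induction t with
  | zero =>
    constructor
    · have : (X 0 ^ (2*0+1) * X 1 - X 0 * X 1 ^ (2*0+1) : R) = 0 := by ring
      rw [this]; exact Subalgebra.zero_mem _
    · have : (X 0 ^ (2*(0+1)+1) * X 1 - X 0 * X 1 ^ (2*(0+1)+1) : R)
          = X 0 ^ 3 * X 1 - X 0 * X 1 ^ 3 := by norm_num
      rw [this]; exact hf
  | succ n ih =>
    refine ⟨ih.2, ?_⟩
    have key : (X 0 ^ (2*(n+2)+1) * X 1 - X 0 * X 1 ^ (2*(n+2)+1) : R) =
        (X 0 ^ 2 + X 1 ^ 2) * (X 0 ^ (2*(n+1)+1) * X 1 - X 0 * X 1 ^ (2*(n+1)+1))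
        - (X 0 ^ 2 * X 1 ^ 2) * (X 0 ^ (2*n+1) * X 1 - X 0 * X 1 ^ (2*n+1)) := by ring
    rw [key]
    exact Subalgebra.sub_mem _ (Subalgebra.mul_mem _ hd ih.2) (Subalgebra.mul_mem _ he ih.1)

lemma neg_one_pow_sq (b : ℕ) : ((-1 : ℤ) ^ b) * ((-1) ^ b) = 1 := by
  rcases Nat.even_or_odd b with h | h
  · rw [h.neg_one_pow]; norm_num
  · rw [h.neg_one_pow]; norm_num

lemma key (P : R) (hP : T P = P) (s : Fin 2 →₀ ℕ) (hs : s ∈ P.support) (hba : s 1 ≤ s 0) :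
    ∃ m : R, m ∈ Ainv ∧ T m = m ∧ (P - m).support ⊆ P.support.erase s := by
  have hc0 : coeff s P ≠ 0 := mem_support_iff.mp hs
  have rel1 : coeff s P = (-1) ^ (s 1) * coeff (sw s) P := fixed_rel hP s
  have rel2 : coeff (sw s) P = (-1) ^ (s 0) * coeff s P := by
    have := fixed_rel hP (sw s)
    rwa [sw_sw, sw1] at this
  have hpar : ((-1 : ℤ)) ^ (s 0) = (-1) ^ (s 1) := by
    have h1 : coeff s P = ((-1) ^ (s 1) * (-1) ^ (s 0)) * coeff s P := by
      rw [mul_assoc, ← rel2, ← rel1]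
    nth_rewrite 1 [← one_mul (coeff s P)] at h1
    have h2 := (mul_right_cancel₀ hc0 h1).symm
    calc ((-1 : ℤ)) ^ (s 0) = ((-1) ^ (s 1) * (-1) ^ (s 1)) * (-1) ^ (s 0) := by
          rw [neg_one_pow_sq, one_mul]
      _ = (-1) ^ (s 1) * ((-1) ^ (s 1) * (-1) ^ (s 0)) := by ring
      _ = (-1) ^ (s 1) := by rw [h2, mul_one]
  rcases eq_or_lt_of_le hba with heq | hlt
  · -- s 1 = s 0 case
    have hsws : sw s = s := by
      ext i
      fin_cases i <;> simp <;> omega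
    have hone : ((-1 : ℤ)) ^ (s 0) = 1 := by
      have h := rel1
      rw [hsws] at h
      nth_rewrite 1 [← one_mul (coeff s P)] at h
      rw [← heq]
      exact (mul_right_cancel₀ hc0 h).symm
    have haeven : Even (s 0) := by
      rcases Nat.even_or_odd (s 0) with h | h
      · exact h
      · rw [h.neg_one_pow] at hone; norm_num at hone
    obtain ⟨k, hk⟩ := haeven
    refine ⟨monomial s (coeff s P), ?_, ?_, ?_⟩
    · have : (monomial s (coeff s P) : R) = C (coeff s P) * (X 0 ^ 2 * X 1 ^ 2) ^ k := by
        rw [monomial_eq2, heq, hk]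
        ring
      rw [this]
      exact Subalgebra.mul_mem _ (C_mem _) (Subalgebra.pow_mem _ he _)
    · rw [T_monomial, hsws, hone, one_mul]
    · intro t ht
      rw [mem_support_iff, coeff_sub, coeff_monomial] at ht
      by_cases hts : t = s
      · subst hts; rw [if_pos rfl, sub_self] at ht; exact absurd rfl ht
      · rw [if_neg (Ne.symm hts), sub_zero] at ht
        exact Finset.mem_erase.mpr ⟨hts, mem_support_iff.mpr ht⟩
  · -- s 1 < s 0 case
    have hne : sw s ≠ s := by
      intro h
      have := congrArg (fun f => f 0) h
      simp only [sw0] at this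
      omega
    refine ⟨monomial s (coeff s P) + monomial (sw s) ((-1) ^ (s 1) * coeff s P), ?_, ?_, ?_⟩
    · -- membership
      have hab : Even (s 0 - s 1) := by
        rcases Nat.even_or_odd (s 1) with hbe | hbo
        · have hae : Even (s 0) := by
            rcases Nat.even_or_odd (s 0) with h | h
            · exact h
            · rw [h.neg_one_pow, hbe.neg_one_pow] at hpar; norm_num at hpar
          exact (Nat.even_sub hba).mpr (by simp [hae, hbe])
        · have hao : Odd (s 0) := by
            rcases Nat.even_or_odd (s 0) with h | h
            · rw [h.neg_one_pow, hbo.neg_one_pow] at hpar; norm_num at hpar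
            · exact h
          exact (Nat.even_sub hba).mpr
            (by simp [Nat.not_even_iff_odd.mpr hao, Nat.not_even_iff_odd.mpr hbo])
      obtain ⟨t, htt⟩ := hab
      have hat : s 0 = s 1 + 2 * t := by omega
      rcases Nat.even_or_odd (s 1) with hbe | hbo
      · have hb1 : ((-1 : ℤ)) ^ (s 1) = 1 := hbe.neg_one_pow
        obtain ⟨u, hu⟩ := hbe
        have hm : (monomial s (coeff s P)
              + monomial (sw s) ((-1) ^ (s 1) * coeff s P) : R)
            = C (coeff s P)
              * ((X 0 ^ 2 * X 1 ^ 2) ^ u * (X 0 ^ (2*t) + X 1 ^ (2*t))) := by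
          rw [monomial_eq2 s, monomial_eq2 (sw s), sw0, sw1, hb1, one_mul, hat, hu]
          ring
        rw [hm]
        exact Subalgebra.mul_mem _ (C_mem _)
          (Subalgebra.mul_mem _ (Subalgebra.pow_mem _ he _) (L1 t))
      · have hb1 : ((-1 : ℤ)) ^ (s 1) = -1 := hbo.neg_one_pow
        obtain ⟨u, hu⟩ := hbo
        have hm : (monomial s (coeff s P)
              + monomial (sw s) ((-1) ^ (s 1) * coeff s P) : R)
            = C (coeff s P)
              * ((X 0 ^ 2 * X 1 ^ 2) ^ u
                * (X 0 ^ (2*t+1) * X 1 - X 0 * X 1 ^ (2*t+1))) := by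
          rw [monomial_eq2 s, monomial_eq2 (sw s), sw0, sw1, hb1, neg_one_mul,
            map_neg, hat, hu]
          ring
        rw [hm]
        exact Subalgebra.mul_mem _ (C_mem _)
          (Subalgebra.mul_mem _ (Subalgebra.pow_mem _ he _) (L2 t))
    · -- fixedness
      rw [map_add, T_monomial, T_monomial, sw_sw, sw0, hpar]
      rw [← mul_assoc, neg_one_pow_sq, one_mul, add_comm]
    · -- support
      intro t ht
      rw [mem_support_iff, coeff_sub, coeff_add, coeff_monomial, coeff_monomial] at ht
      by_cases hts : t = s
      · subst hts
        rw [if_pos rfl, if_neg hne, add_zero, sub_self] at ht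
        exact absurd rfl ht
      · by_cases htw : t = sw s
        · subst htw
          rw [if_neg (fun h : s = sw s => hne h.symm), if_pos rfl,
            rel2, hpar, zero_add, sub_self] at ht
          exact absurd rfl ht
        · rw [if_neg (fun h => hts h.symm), if_neg (fun h => htw h.symm),
            add_zero, sub_zero] at ht
          exact Finset.mem_erase.mpr ⟨hts, mem_support_iff.mpr ht⟩

lemma fwd_aux : ∀ n (P : R), P.support.card ≤ n → T P = P → P ∈ Ainv := by
  intro n
  induction n with
  | zero =>
    intro P hcard _
    have : P = 0 := support_eq_empty.mp (Finset.card_eq_zero.mp (Nat.le_zero.mp hcard))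
    rw [this]; exact Subalgebra.zero_mem _
  | succ n ih =>
    intro P hcard hP
    rcases eq_or_ne P 0 with h0 | h0
    · rw [h0]; exact Subalgebra.zero_mem _
    obtain ⟨s₀, hs₀⟩ := Finset.nonempty_iff_ne_empty.mpr
      (fun h => h0 (support_eq_empty.mp h))
    obtain ⟨s, hs, hba⟩ : ∃ s ∈ P.support, s 1 ≤ s 0 := by
      rcases le_total (s₀ 1) (s₀ 0) with h | h
      · exact ⟨s₀, hs₀, h⟩
      · refine ⟨sw s₀, ?_, by simpa using h⟩
        rw [mem_support_iff]
        intro hz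
        have := fixed_rel hP s₀
        rw [hz, mul_zero] at this
        exact mem_support_iff.mp hs₀ this
    obtain ⟨m, hmA, hmT, hsub⟩ := key P hP s hs hba
    have hQ : T (P - m) = P - m := by rw [map_sub, hP, hmT]
    have hcard' : (P - m).support.card ≤ n := by
      calc (P - m).support.card ≤ (P.support.erase s).card := Finset.card_le_card hsub
        _ = P.support.card - 1 := Finset.card_erase_of_mem hs
        _ ≤ n := by omega
    have := ih (P - m) hcard' hQ
    have hP' : P = (P - m) + m := by ring
    rw [hP']
    exact Subalgebra.add_mem _ this hmA

lemma bwd : ∀ P ∈ Ainv, T P = P := by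
  intro P hP
  have : Ainv ≤ AlgHom.equalizer T (AlgHom.id ℤ R) := by
    apply Algebra.adjoin_le
    rintro x (rfl | rfl | rfl)
    · show T _ = _
      simp only [T, map_add, map_pow, aeval_X, Matrix.cons_val_zero, Matrix.cons_val_one,
        Matrix.head_cons, AlgHom.id_apply]
      ring
    · show T _ = _
      simp only [T, map_mul, map_pow, aeval_X, Matrix.cons_val_zero, Matrix.cons_val_one,
        Matrix.head_cons, AlgHom.id_apply]
      ring
    · show T _ = _
      simp only [T, map_sub, map_mul, map_pow, aeval_X, Matrix.cons_val_zero, Matrix.cons_val_one,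
        Matrix.head_cons, AlgHom.id_apply]
      ring
  exact this hP

end Z4InvAux

/-- The invariants of `ℤ[x,y]` under the order-4 automorphism `T : x ↦ -y, y ↦ x` form the
subring generated by `d = x² + y²`, `e = x²y²`, `f = x³y - xy³`, and these satisfy
`f² = (d² - 4e)e`. -/
theorem Z4_invariants_of_ZXY :
    (∀ P : MvPolynomial (Fin 2) ℤ,
      aeval ![-(X 1 : MvPolynomial (Fin 2) ℤ), X 0] P = P ↔
        P ∈ Algebra.adjoin ℤ
          ({(X 0 : MvPolynomial (Fin 2) ℤ) ^ 2 + (X 1) ^ 2,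
            (X 0) ^ 2 * (X 1) ^ 2,
            (X 0) ^ 3 * X 1 - X 0 * (X 1) ^ 3} : Set (MvPolynomial (Fin 2) ℤ))) ∧
    ((X 0 : MvPolynomial (Fin 2) ℤ) ^ 3 * X 1 - X 0 * (X 1) ^ 3) ^ 2 =
      (((X 0) ^ 2 + (X 1) ^ 2) ^ 2 - 4 * ((X 0) ^ 2 * (X 1) ^ 2)) *
        ((X 0) ^ 2 * (X 1) ^ 2) := by
  constructor
  · intro P
    constructor
    · intro h
      exact Z4InvAux.fwd_aux P.support.card P le_rfl h
    · intro h
      exact Z4InvAux.bwd P h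
  · ring
end
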